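/- arXiv:2302.09881 — 6 statements merged into one kernel-verified Lean document; each statement's English description precedes it below -/
import Mathlib

section
/- For partial orders A and B, the set of finite multisets over the linear sum A + B (every element of A below every element of B), ordered by the multiset ordering, is order isomorphic to the lexicographic product M^r(A) · M^r(B), i.e., pairs (m_A, m_B) ordered by: (m_A, m_B) ≤ (m'_A, m'_B) iff m_B < m'_B in the multiset ordering on M(B), or m_B = m'_B and m_A ≤ m'_A in the multiset ordering on M(A). -/
open Ordinal

/-- Multiset embedding w.r.t. a relation `le`: `m ≤⋄ m'` iff there is an injection
from `m` into `m'` (respecting multiplicities) mapping each element to a larger one. -/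
def MulEmb {X : Type*} (le : X → X → Prop) (m m' : Multiset X) : Prop :=
  ∃ t ≤ m', Multiset.Rel le m t

open scoped Classical in
/-- Dershowitz–Manna multiset ordering w.r.t. a strict relation `lt`. -/
def MulDM {X : Type*} (lt : X → X → Prop) (m m' : Multiset X) : Prop :=
  m = m' ∨ ∀ x ∈ m - m ∩ m', ∃ y ∈ m' - m ∩ m', lt x y

/-- Well quasi order: every infinite sequence has an increasing pair. -/
def IsWqo {X : Type*} (le : X → X → Prop) : Prop :=
  ∀ f : ℕ → X, ∃ i j : ℕ, i < j ∧ le (f i) (f j)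

open scoped Classical in
private lemma mem_sub_inter_iff {X : Type*} (m m' : Multiset X) (x : X) :
    x ∈ m - m ∩ m' ↔ m'.count x < m.count x := by
  rw [← Multiset.count_pos, Multiset.count_sub, Multiset.count_inter]
  omega

open scoped Classical in
private lemma mulDM_iff_counts {X : Type*} (lt : X → X → Prop) (m m' : Multiset X) :
    MulDM lt m m' ↔ m = m' ∨
      ∀ x, m'.count x < m.count x → ∃ y, m.count y < m'.count y ∧ lt x y := by
  unfold MulDM
  refine or_congr Iff.rfl ?_
  constructor
  · intro h x hx
    obtain ⟨y, hy, hlt⟩ := h x ((mem_sub_inter_iff m m' x).2 hx)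
    exact ⟨y, (mem_sub_inter_iff m' m y).1 (by simpa [Multiset.inter_comm] using hy), hlt⟩
  · intro h x hx
    obtain ⟨y, hy, hlt⟩ := h x ((mem_sub_inter_iff m m' x).1 hx)
    exact ⟨y, by simpa [Multiset.inter_comm] using (mem_sub_inter_iff m' m y).2 hy, hlt⟩

section Main

variable {A B : Type*} [PartialOrder A] [PartialOrder B]

private def fL (p : Multiset A × Multiset B) : Multiset (A ⊕ₗ B) :=
  p.1.map (fun a => toLex (Sum.inl a)) + p.2.map (fun b => toLex (Sum.inr b))

omit [PartialOrder A] [PartialOrder B] in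
private lemma inl_inj : Function.Injective (fun a : A => (toLex (Sum.inl a) : A ⊕ₗ B)) :=
  fun _ _ h => Sum.inl_injective (toLex.injective h)

omit [PartialOrder A] [PartialOrder B] in
private lemma inr_inj : Function.Injective (fun b : B => (toLex (Sum.inr b) : A ⊕ₗ B)) :=
  fun _ _ h => Sum.inr_injective (toLex.injective h)

private lemma count_fL_inl (u : Multiset A) (v : Multiset B) (a : A) :
    @Multiset.count _ (fun a b => Classical.propDecidable (a = b))
        (toLex (Sum.inl a) : A ⊕ₗ B) (fL (u, v))
      = @Multiset.count _ (fun a b => Classical.propDecidable (a = b)) a u := by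
  classical
  have e1 : (fun a b => Classical.propDecidable (a = b)) = (inferInstance : DecidableEq (A ⊕ₗ B)) :=
    Subsingleton.elim _ _
  have e2 : (fun a b => Classical.propDecidable (a = b)) = (inferInstance : DecidableEq A) :=
    Subsingleton.elim _ _
  rw [e1, e2]
  have h1 := Multiset.count_map_eq_count'
    (fun a : A => (toLex (Sum.inl a) : A ⊕ₗ B)) u inl_inj a
  have h2 : Multiset.count (toLex (Sum.inl a) : A ⊕ₗ B)
      (v.map (fun b => toLex (Sum.inr b))) = 0 := by
    rw [Multiset.count_eq_zero_of_notMem]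
    simp only [Multiset.mem_map]
    rintro ⟨b, -, hb⟩
    exact absurd (toLex.injective hb) (by simp)
  simp only [fL]
  rw [Multiset.count_add, h1, h2, add_zero]

private lemma count_fL_inr (u : Multiset A) (v : Multiset B) (b : B) :
    @Multiset.count _ (fun a b => Classical.propDecidable (a = b))
        (toLex (Sum.inr b) : A ⊕ₗ B) (fL (u, v))
      = @Multiset.count _ (fun a b => Classical.propDecidable (a = b)) b v := by
  classical
  have e1 : (fun a b => Classical.propDecidable (a = b)) = (inferInstance : DecidableEq (A ⊕ₗ B)) :=
    Subsingleton.elim _ _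
  have e2 : (fun a b => Classical.propDecidable (a = b)) = (inferInstance : DecidableEq B) :=
    Subsingleton.elim _ _
  rw [e1, e2]
  have h1 := Multiset.count_map_eq_count'
    (fun b : B => (toLex (Sum.inr b) : A ⊕ₗ B)) v inr_inj b
  have h2 : Multiset.count (toLex (Sum.inr b) : A ⊕ₗ B)
      (u.map (fun a => toLex (Sum.inl a))) = 0 := by
    rw [Multiset.count_eq_zero_of_notMem]
    simp only [Multiset.mem_map]
    rintro ⟨a, -, ha⟩
    exact absurd (toLex.injective ha) (by simp)
  simp only [fL]
  rw [Multiset.count_add, h1, h2, zero_add]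

private lemma fL_inj : Function.Injective (fL (A := A) (B := B)) := by
  intro p q h
  obtain ⟨p1, p2⟩ := p
  obtain ⟨q1, q2⟩ := q
  have h1 : p1 = q1 := (@Multiset.ext A (fun a b => Classical.propDecidable (a = b)) _ _).2
    fun a => by rw [← count_fL_inl p1 p2 a, ← count_fL_inl q1 q2 a, h]
  have h2 : p2 = q2 := (@Multiset.ext B (fun a b => Classical.propDecidable (a = b)) _ _).2
    fun b => by rw [← count_fL_inr p1 p2 b, ← count_fL_inr q1 q2 b, h]
  simp [h1, h2]

private lemma fL_surj : Function.Surjective (fL (A := A) (B := B)) := by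
  intro m
  induction m using Multiset.induction with
  | empty => exact ⟨(0, 0), by simp [fL]⟩
  | cons x m ih =>
      obtain ⟨p, rfl⟩ := ih
      rcases x with x | x
      · exact ⟨(x ::ₘ p.1, p.2), by simp [fL, Multiset.cons_add]; rfl⟩
      · exact ⟨(p.1, x ::ₘ p.2), by simp [fL, Multiset.add_cons]; rfl⟩

omit [PartialOrder A] [PartialOrder B] in
private lemma lex_cases (z : A ⊕ₗ B) :
    (∃ y, z = toLex (Sum.inl y)) ∨ ∃ y, z = toLex (Sum.inr y) := by
  rcases z with y | y
  exacts [Or.inl ⟨y, rfl⟩, Or.inr ⟨y, rfl⟩]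

open scoped Classical in
private lemma key (a a' : Multiset A) (b b' : Multiset B) :
    MulDM (· < ·) (fL (a, b)) (fL (a', b')) ↔
      ((MulDM (· < ·) b b' ∧ b ≠ b') ∨ (b = b' ∧ MulDM (· < ·) a a')) := by
  have heq : fL (a, b) = fL (a', b') ↔ a = a' ∧ b = b' := by
    constructor
    · intro h
      have := fL_inj h
      exact ⟨congrArg Prod.fst this, congrArg Prod.snd this⟩
    · rintro ⟨rfl, rfl⟩; rfl
  rw [mulDM_iff_counts, mulDM_iff_counts, mulDM_iff_counts]
  constructor
  · rintro (h | h)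
    · obtain ⟨rfl, rfl⟩ := heq.1 h
      exact Or.inr ⟨rfl, Or.inl rfl⟩
    · by_cases hb : b = b'
      · subst hb
        refine Or.inr ⟨rfl, Or.inr fun x hx => ?_⟩
        obtain ⟨y, hy, hlt⟩ := h (toLex (Sum.inl x)) (by rwa [count_fL_inl, count_fL_inl])
        obtain ⟨y, rfl⟩ | ⟨y, rfl⟩ := lex_cases y
        · rw [count_fL_inl, count_fL_inl] at hy
          exact ⟨y, hy, Sum.Lex.inl_lt_inl_iff.1 hlt⟩
        · rw [count_fL_inr, count_fL_inr] at hy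
          omega
      · refine Or.inl ⟨Or.inr fun x hx => ?_, hb⟩
        obtain ⟨y, hy, hlt⟩ := h (toLex (Sum.inr x)) (by rwa [count_fL_inr, count_fL_inr])
        obtain ⟨y, rfl⟩ | ⟨y, rfl⟩ := lex_cases y
        · exact absurd hlt Sum.Lex.not_inr_lt_inl
        · rw [count_fL_inr, count_fL_inr] at hy
          exact ⟨y, hy, Sum.Lex.inr_lt_inr_iff.1 hlt⟩
  · rintro (⟨hb, hbne⟩ | ⟨rfl, ha⟩)
    · rcases hb with rfl | hb
      · exact absurd rfl hbne
      · have hz : ∃ z, b.count z < b'.count z := by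
          by_contra hc
          push_neg at hc
          apply hbne
          refine Multiset.ext.2 fun z => le_antisymm ?_ (hc z)
          by_contra hlt
          push_neg at hlt
          obtain ⟨y, hy, -⟩ := hb z hlt
          exact absurd hy (not_lt.2 (hc y))
        obtain ⟨z, hz⟩ := hz
        refine Or.inr fun x hx => ?_
        obtain ⟨x, rfl⟩ | ⟨x, rfl⟩ := lex_cases x
        · exact ⟨toLex (Sum.inr z), by rwa [count_fL_inr, count_fL_inr],
            Sum.Lex.inl_lt_inr _ _⟩
        · rw [count_fL_inr, count_fL_inr] at hx
          obtain ⟨y, hy, hlt⟩ := hb x hx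
          exact ⟨toLex (Sum.inr y), by rwa [count_fL_inr, count_fL_inr],
            Sum.Lex.inr_lt_inr_iff.2 hlt⟩
    · rcases ha with rfl | ha
      · exact Or.inl rfl
      · refine Or.inr fun x hx => ?_
        obtain ⟨x, rfl⟩ | ⟨x, rfl⟩ := lex_cases x
        · rw [count_fL_inl, count_fL_inl] at hx
          obtain ⟨y, hy, hlt⟩ := ha x hx
          exact ⟨toLex (Sum.inl y), by rwa [count_fL_inl, count_fL_inl],
            Sum.Lex.inl_lt_inl_iff.2 hlt⟩
        · rw [count_fL_inr, count_fL_inr] at hx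
          omega

end Main

theorem stmt4 (A B : Type*) [PartialOrder A] [PartialOrder B] :
    ∃ e : Multiset (A ⊕ₗ B) ≃ Multiset A × Multiset B,
      ∀ m m' : Multiset (A ⊕ₗ B),
        MulDM (· < ·) m m' ↔
          ((MulDM (· < ·) (e m).2 (e m').2 ∧ (e m).2 ≠ (e m').2) ∨
           ((e m).2 = (e m').2 ∧ MulDM (· < ·) (e m).1 (e m').1)) := by
  have hbij : Function.Bijective (fL (A := A) (B := B)) := ⟨fL_inj, fL_surj⟩
  let f := Equiv.ofBijective _ hbij
  refine ⟨f.symm, fun m m' => ?_⟩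
  have hm : m = fL ((f.symm m).1, (f.symm m).2) := (f.apply_symm_apply m).symm
  have hm' : m' = fL ((f.symm m').1, (f.symm m').2) := (f.apply_symm_apply m').symm
  conv_lhs => rw [hm, hm']
  exact key _ _ _ _
end

section
/- For partial orders A and B, the identity map from the multiset embedding order on M(A+B) to the lexicographic product M^⋄(A) · M^⋄(B) (splitting each multiset into its A-part and B-part) is monotone; i.e., the lexicographic product is an augmentation of the multiset embedding on the linear sum: if m ≤_⋄ m' in M(A+B), then (m_A, m_B) ≤ (m'_A, m'_B) lexicographically (comparing B-parts by multiset embedding first, then A-parts). -/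
open Ordinal

/-- The `A`-part of a multiset over the linear sum `A ⊕ₗ B`. -/
def leftPart {A B : Type*} (m : Multiset (A ⊕ₗ B)) : Multiset A :=
  m.filterMap (fun x => (ofLex x).getLeft?)

/-- The `B`-part of a multiset over the linear sum `A ⊕ₗ B`. -/
def rightPart {A B : Type*} (m : Multiset (A ⊕ₗ B)) : Multiset B :=
  m.filterMap (fun x => (ofLex x).getRight?)

lemma leftPart_cons_inl {A B : Type*} (a : A) (m : Multiset (A ⊕ₗ B)) :
    leftPart (toLex (Sum.inl a) ::ₘ m) = a ::ₘ leftPart m :=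
  Multiset.filterMap_cons_some _ _ _ rfl

lemma leftPart_cons_inr {A B : Type*} (b : B) (m : Multiset (A ⊕ₗ B)) :
    leftPart (toLex (Sum.inr b) ::ₘ m) = leftPart m :=
  Multiset.filterMap_cons_none _ _ rfl

lemma rightPart_cons_inl {A B : Type*} (a : A) (m : Multiset (A ⊕ₗ B)) :
    rightPart (toLex (Sum.inl a) ::ₘ m) = rightPart m :=
  Multiset.filterMap_cons_none _ _ rfl

lemma rightPart_cons_inr {A B : Type*} (b : B) (m : Multiset (A ⊕ₗ B)) :
    rightPart (toLex (Sum.inr b) ::ₘ m) = b ::ₘ rightPart m :=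
  Multiset.filterMap_cons_some _ _ _ rfl

lemma key_s5 {A B : Type*} [PartialOrder A] [PartialOrder B]
    {m t : Multiset (A ⊕ₗ B)} (h : Multiset.Rel (· ≤ ·) m t) :
    ∃ s ≤ rightPart t, Multiset.Rel (· ≤ ·) (rightPart m) s ∧
      (s = rightPart t → Multiset.Rel (· ≤ ·) (leftPart m) (leftPart t)) := by
  induction h with
  | zero => exact ⟨0, le_rfl, Multiset.Rel.zero, fun _ => Multiset.Rel.zero⟩
  | @cons a b as bs hab hrel ih =>
    obtain ⟨s, hs, hsrel, himp⟩ := ih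
    rcases ha : ofLex a with a' | a' <;> rcases hb : ofLex b with b' | b' <;>
        rw [show a = toLex (ofLex a) from rfl, show b = toLex (ofLex b) from rfl, ha, hb] at hab ⊢
    · refine ⟨s, by rwa [rightPart_cons_inl], by rwa [rightPart_cons_inl], fun he => ?_⟩
      rw [leftPart_cons_inl, leftPart_cons_inl]
      exact Multiset.Rel.cons (Sum.Lex.inl_le_inl_iff.mp hab) (himp (by rwa [rightPart_cons_inl] at he))
    · refine ⟨s, ?_, by rwa [rightPart_cons_inl], fun he => ?_⟩
      · rw [rightPart_cons_inr]; exact hs.trans (Multiset.le_cons_self _ _)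
      · exfalso
        rw [rightPart_cons_inr] at he
        have := Multiset.card_le_card hs
        rw [he] at this
        simp at this
    · exact absurd hab Sum.Lex.not_inr_le_inl
    · refine ⟨b' ::ₘ s, ?_, ?_, fun he => ?_⟩
      · rw [rightPart_cons_inr]; exact Multiset.cons_le_cons _ hs
      · rw [rightPart_cons_inr]
        exact Multiset.Rel.cons (Sum.Lex.inr_le_inr_iff.mp hab) hsrel
      · rw [leftPart_cons_inr, leftPart_cons_inr]
        rw [rightPart_cons_inr] at he
        exact himp (Multiset.cons_inj_right b' |>.mp he)

theorem stmt5 (A B : Type*) [PartialOrder A] [PartialOrder B]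
    (m m' : Multiset (A ⊕ₗ B)) (h : MulEmb (· ≤ ·) m m') :
    (MulEmb (· ≤ ·) (rightPart m) (rightPart m') ∧ rightPart m ≠ rightPart m') ∨
    (rightPart m = rightPart m' ∧ MulEmb (· ≤ ·) (leftPart m) (leftPart m')) := by
  obtain ⟨t, ht, hrel⟩ := h
  obtain ⟨s, hs, hsrel, himp⟩ := key_s5 hrel
  have htr : rightPart t ≤ rightPart m' := Multiset.filterMap_le_filterMap _ ht
  by_cases heq : rightPart m = rightPart m'
  · right
    refine ⟨heq, ?_⟩
    have hcard : Multiset.card s = Multiset.card (rightPart m) :=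
      (Multiset.card_eq_card_of_rel hsrel).symm
    have hst : s = rightPart t := Multiset.eq_of_le_of_card_le hs
      (by rw [hcard, heq]; exact Multiset.card_le_card htr)
    exact ⟨leftPart t, Multiset.filterMap_le_filterMap _ ht, himp hst⟩
  · exact Or.inl ⟨⟨s, hs.trans htr, hsrel⟩, heq⟩
end

section
/- For any partial order X and finite multisets m, m' over X, if m ≤ m' in the multiset embedding, then m ≤ m' in the multiset (Dershowitz–Manna) ordering; that is, the multiset ordering is an augmentation of the multiset embedding. -/
open Ordinal

section aux
variable {X : Type*} [PartialOrder X] [DecidableEq X]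

lemma mulEmb_erase {a : X} {m m' : Multiset X} (ham : a ∈ m) (ham' : a ∈ m')
    (h : MulEmb (· ≤ ·) m m') : MulEmb (· ≤ ·) (m.erase a) (m'.erase a) := by
  obtain ⟨t, htm', hrel⟩ := h
  by_cases hat : a ∈ t
  · -- decompose Rel on right at a
    rw [← Multiset.cons_erase hat, Multiset.rel_cons_right] at hrel
    obtain ⟨c, m₀, hca, hrel₀, hm⟩ := hrel
    by_cases hca' : c = a
    · subst hca'
      refine ⟨t.erase c, Multiset.erase_le_erase c htm', ?_⟩
      have : m.erase c = m₀ := by rw [hm, Multiset.erase_cons_head]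
      rwa [this]
    · -- a ∈ m₀
      have ham₀ : a ∈ m₀ := by
        have := ham
        rw [hm, Multiset.mem_cons] at this
        tauto
      rw [← Multiset.cons_erase ham₀, Multiset.rel_cons_left] at hrel₀
      obtain ⟨b, t₀, hab, hrel₁, ht⟩ := hrel₀
      refine ⟨t.erase a, Multiset.erase_le_erase a htm', ?_⟩
      have hme : m.erase a = c ::ₘ (m₀.erase a) := by
        rw [hm, Multiset.erase_cons_tail_of_mem ham₀]
      rw [hme, ht, Multiset.rel_cons_left]
      exact ⟨b, t₀, le_trans hca hab, hrel₁, rfl⟩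
  · -- t ≤ m'.erase a
    have htm'e : t ≤ m'.erase a := by
      rw [Multiset.le_iff_count] at htm' ⊢
      intro x
      rcases eq_or_ne x a with rfl | hx
      · simp [Multiset.count_eq_zero_of_notMem hat]
      · rw [Multiset.count_erase_of_ne hx]; exact htm' x
    rw [← Multiset.cons_erase ham, Multiset.rel_cons_left] at hrel
    obtain ⟨b, t₀, hab, hrel₀, ht⟩ := hrel
    refine ⟨t₀, le_trans ?_ htm'e, hrel₀⟩
    rw [ht]; exact le_of_lt (Multiset.lt_cons_self t₀ b)

lemma mulEmb_sub (s : Multiset X) : ∀ m m' : Multiset X, s ≤ m → s ≤ m' →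
    MulEmb (· ≤ ·) m m' → MulEmb (· ≤ ·) (m - s) (m' - s) := by
  induction s using Multiset.induction with
  | empty => intro m m' _ _ h; simpa using h
  | cons a s ih =>
    intro m m' hsm hsm' h
    have ham : a ∈ m := Multiset.mem_of_le hsm (Multiset.mem_cons_self a s)
    have ham' : a ∈ m' := Multiset.mem_of_le hsm' (Multiset.mem_cons_self a s)
    rw [Multiset.sub_cons, Multiset.sub_cons]
    refine ih _ _ ?_ ?_ (mulEmb_erase ham ham' h)
    · rw [Multiset.le_iff_count] at hsm ⊢
      intro x
      have := hsm x
      rcases eq_or_ne x a with rfl | hx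
      · rw [Multiset.count_erase_self]
        simpa using Nat.le_sub_one_of_lt (lt_of_lt_of_le (by simp) this)
      · rw [Multiset.count_erase_of_ne hx]
        exact le_trans (by simp [hx]) this
    · rw [Multiset.le_iff_count] at hsm' ⊢
      intro x
      have := hsm' x
      rcases eq_or_ne x a with rfl | hx
      · rw [Multiset.count_erase_self]
        simpa using Nat.le_sub_one_of_lt (lt_of_lt_of_le (by simp) this)
      · rw [Multiset.count_erase_of_ne hx]
        exact le_trans (by simp [hx]) this

end aux

theorem stmt7 (X : Type*) [PartialOrder X] (m m' : Multiset X)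
    (h : MulEmb (· ≤ ·) m m') : MulDM (· < ·) m m' := by
  classical
  right
  intro x hx
  have hd := mulEmb_sub (m ∩ m') m m' Multiset.inter_le_left Multiset.inter_le_right h
  obtain ⟨t, ht, hrel⟩ := hd
  obtain ⟨y, hyt, hxy⟩ := Multiset.exists_mem_of_rel_of_mem hrel hx
  refine ⟨y, Multiset.mem_of_le ht hyt, lt_of_le_of_ne hxy ?_⟩
  rintro rfl
  have h1 : x ∈ m - m ∩ m' := hx
  have h2 : x ∈ m' - m ∩ m' := Multiset.mem_of_le ht hyt
  rw [← Multiset.count_pos, Multiset.count_sub, Multiset.count_inter] at h1 h2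
  omega
end

section
/- If X is a well partial order (well-founded with no infinite antichains), then the finite multisets over X with the multiset embedding form a well partial order. -/
open Ordinal

/-- Restriction lemma: a sub-multiset of the left side of a `Rel` can be matched
to a sub-multiset of the right side. -/
lemma rel_restrict {X : Type*} {r : X → X → Prop} {s m t : Multiset X}
    (hs : s ≤ m) (h : Multiset.Rel r m t) : ∃ u ≤ t, Multiset.Rel r s u := by
  obtain ⟨d, rfl⟩ := Multiset.le_iff_exists_add.mp hs
  obtain ⟨u, v, hu, hv, rfl⟩ := Multiset.rel_add_left.mp h
  exact ⟨u, Multiset.le_add_right u v, hu⟩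

/-- Antisymmetry of the pointwise lifting of `≤` to multisets. -/
lemma rel_le_antisymm {X : Type*} [PartialOrder X] :
    ∀ n (m m' : Multiset X), Multiset.card m = n →
      Multiset.Rel (· ≤ ·) m m' → Multiset.Rel (· ≤ ·) m' m → m = m' := by
  intro n
  induction n with
  | zero =>
    intro m m' hc h _
    rw [Multiset.card_eq_zero.mp hc] at h ⊢
    exact (Multiset.rel_zero_left.mp h).symm
  | succ k ih =>
    intro m m' hc h h'
    -- pick a maximal element of m + m'
    have hne : m ≠ 0 := by
      intro h0; rw [h0] at hc; simp at hc
    have hfin : ({x | x ∈ m + m'} : Set X).Finite := (m + m').finite_toSet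
    have hnonempty : ({x | x ∈ m + m'} : Set X).Nonempty := by
      obtain ⟨x, hx⟩ := Multiset.exists_mem_of_ne_zero hne
      exact ⟨x, by simp [hx]⟩
    obtain ⟨x, hxM⟩ := hfin.exists_maximal hnonempty
    have hxmem := hxM.1
    have hxmax : ∀ y ∈ ({x | x ∈ m + m'} : Set X), x ≤ y → x = y :=
      fun y hy hxy => le_antisymm hxy (hxM.2 hy hxy)
    simp only [Set.mem_setOf_eq, Multiset.mem_add] at hxmem
    have hmax : ∀ y, y ∈ m + m' → x ≤ y → y = x := by
      intro y hy hxy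
      exact (hxmax y (by simpa using hy) hxy).symm
    -- WLOG x ∈ m: handle both cases by a symmetric argument
    have key : ∀ (a b : Multiset X), Multiset.card a = k + 1 → x ∈ a →
        (∀ y, y ∈ a + b → x ≤ y → y = x) →
        Multiset.Rel (· ≤ ·) a b → Multiset.Rel (· ≤ ·) b a → a = b := by
      intro a b hca hxa hmax hab hba
      obtain ⟨a₀, rfl⟩ := Multiset.exists_cons_of_mem hxa
      obtain ⟨y, b₀, hxy, hab₀, rfl⟩ := Multiset.rel_cons_left.mp hab
      have hyx : y = x := hmax y (by simp) hxy
      rw [hyx] at hba hmax ⊢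
      obtain ⟨z, c, hxz, hbc, hc⟩ := Multiset.rel_cons_left.mp hba
      have hzx : z = x := by
        refine hmax z ?_ hxz
        rw [Multiset.mem_add]
        left
        rw [hc]
        exact Multiset.mem_cons_self z c
      rw [hzx] at hc
      have hca₀ : a₀ = c := by
        rwa [Multiset.cons_inj_right x] at hc
      subst hca₀
      have : a₀ = b₀ := by
        refine ih a₀ b₀ ?_ hab₀ hbc
        have := hca
        simpa using this
      rw [this]
    rcases hxmem with hxm | hxm'
    · exact key m m' hc hxm hmax h h'
    · have : m' = m := by
        refine key m' m ?_ hxm' ?_ h' h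
        · rw [← Multiset.card_eq_card_of_rel h, hc]
        · intro y hy hxy
          exact hmax y (by rw [Multiset.mem_add] at hy ⊢; tauto) hxy
      exact this.symm

lemma forall₂_to_rel {X : Type*} {r : X → X → Prop} :
    ∀ {l₁ l₂ : List X}, List.Forall₂ r l₁ l₂ →
      Multiset.Rel r (l₁ : Multiset X) (l₂ : Multiset X) := by
  intro l₁ l₂ h
  induction h with
  | nil => exact Multiset.Rel.zero
  | cons h _ ih => exact Multiset.Rel.cons h ih

theorem stmt10 (X : Type*) [PartialOrder X]
    (hX : IsWqo ((· ≤ ·) : X → X → Prop)) :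
    IsWqo (MulEmb ((· ≤ ·) : X → X → Prop)) ∧
    IsPartialOrder (Multiset X) (MulEmb ((· ≤ ·) : X → X → Prop)) := by
  constructor
  · -- WQO: Higman's lemma
    intro f
    have hpwo : (Set.univ : Set X).PartiallyWellOrderedOn (· ≤ ·) := by
      rw [Set.partiallyWellOrderedOn_iff_exists_lt]
      intro g _
      obtain ⟨i, j, hij, h⟩ := hX g
      exact ⟨i, j, hij, h⟩
    have hlists := hpwo.partiallyWellOrderedOn_sublistForall₂ (· ≤ ·)
    obtain ⟨i, j, hij, hrel⟩ := (Set.partiallyWellOrderedOn_iff_exists_lt.mp hlists) (fun n => (f n).toList) (by simp)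
    obtain ⟨l, hforall, hsub⟩ := List.sublistForall₂_iff.mp hrel
    refine ⟨i, j, hij, ⟨(l : Multiset X), ?_, ?_⟩⟩
    · calc (l : Multiset X) ≤ ((f j).toList : Multiset X) :=
            Multiset.coe_le.mpr hsub.subperm
        _ = f j := Multiset.coe_toList _
    · have := forall₂_to_rel hforall
      rwa [Multiset.coe_toList] at this
  · refine { refl := ?_, trans := ?_, antisymm := ?_ }
    · -- reflexivity
      intro m
      exact ⟨m, le_refl m, Multiset.rel_refl_of_refl_on fun _ _ => le_refl _⟩
    · -- transitivity
      rintro a b c ⟨t, htb, hat⟩ ⟨t', htc, hbt'⟩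
      obtain ⟨u, hut', htu⟩ := rel_restrict htb hbt'
      exact ⟨u, le_trans hut' htc, Multiset.Rel.trans _ hat htu⟩
    · -- antisymmetry
      rintro a b ⟨t, htb, hat⟩ ⟨t', hta, hbt'⟩
      have hca : Multiset.card a = Multiset.card t := Multiset.card_eq_card_of_rel hat
      have hcb : Multiset.card b = Multiset.card t' := Multiset.card_eq_card_of_rel hbt'
      have h1 : Multiset.card t ≤ Multiset.card b := Multiset.card_le_card htb
      have h2 : Multiset.card t' ≤ Multiset.card a := Multiset.card_le_card hta
      have hteq : t = b := Multiset.eq_of_le_of_card_le htb (by omega)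
      have ht'eq : t' = a := Multiset.eq_of_le_of_card_le hta (by omega)
      rw [hteq] at hat
      rw [ht'eq] at hbt'
      exact rel_le_antisymm (Multiset.card a) a b rfl hat hbt'
end

section
/- If X is a well partial order, then the finite multisets over X with the multiset (Dershowitz–Manna) ordering form a well partial order. -/
open Ordinal

open scoped Classical in
private lemma mem_sub_inter_left {X : Type*} {m m' : Multiset X} {a : X} :
    a ∈ m - m ∩ m' ↔ Multiset.count a m' < Multiset.count a m := by
  rw [← Multiset.count_pos, Multiset.count_sub, Multiset.count_inter]
  omega

open scoped Classical in
private lemma mem_sub_inter_right {X : Type*} {m m' : Multiset X} {a : X} :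
    a ∈ m' - m ∩ m' ↔ Multiset.count a m < Multiset.count a m' := by
  rw [← Multiset.count_pos, Multiset.count_sub, Multiset.count_inter]
  omega

open scoped Classical in
private lemma mulDM_iff {X : Type*} [PartialOrder X] (m m' : Multiset X) :
    MulDM ((· < ·) : X → X → Prop) m m' ↔
      (m = m' ∨ ∀ x : X, Multiset.count x m' < Multiset.count x m →
        ∃ y : X, x < y ∧ Multiset.count y m < Multiset.count y m') := by
  unfold MulDM
  apply or_congr_right
  constructor
  · intro h x hx
    obtain ⟨y, hy, hxy⟩ := h x (mem_sub_inter_left.2 hx)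
    exact ⟨y, hxy, mem_sub_inter_right.1 hy⟩
  · intro h x hx
    obtain ⟨y, hxy, hy⟩ := h x (mem_sub_inter_left.1 hx)
    exact ⟨y, mem_sub_inter_right.2 hy, hxy⟩

open scoped Classical in
private lemma filter_card_le_of_rel {X : Type*} [PartialOrder X] {p : X → Prop}
    (hp : ∀ a b, p a → a ≤ b → p b) {s t : Multiset X}
    (h : Multiset.Rel (· ≤ ·) s t) :
    (s.filter p).card ≤ (t.filter p).card := by
  induction h with
  | zero => simp
  | @cons a b as bs hab h ih =>
    rw [Multiset.filter_cons, Multiset.filter_cons, Multiset.card_add, Multiset.card_add]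
    by_cases hpa : p a
    · have hpb : p b := hp a b hpa hab
      simp [hpa, hpb]; omega
    · simp only [if_neg hpa]
      split_ifs <;> simp <;> omega

open scoped Classical in
private lemma filter_le_card_split {X : Type*} [PartialOrder X] (x : X) (s : Multiset X) :
    (s.filter (x ≤ ·)).card = Multiset.count x s + (s.filter (x < ·)).card := by
  induction s using Multiset.induction with
  | empty => simp
  | cons a s ih =>
    rw [Multiset.filter_cons, Multiset.filter_cons, Multiset.count_cons,
      Multiset.card_add, Multiset.card_add]
    by_cases hax : a = x
    · subst hax
      simp only [le_refl, if_true, lt_irrefl, if_false, Multiset.card_add,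
        Multiset.card_singleton, Multiset.card_zero, if_pos rfl, ih]
      omega
    · have : x < a ↔ x ≤ a := by
        constructor
        · exact le_of_lt
        · intro h; exact lt_of_le_of_ne h (fun e => hax e.symm)
      have hne : ¬ x = a := fun e => hax e.symm
      by_cases hxa : x ≤ a
      · simp only [if_pos hxa, if_pos (this.2 hxa), if_neg hne, Multiset.card_singleton, ih]
        omega
      · simp only [if_neg hxa, if_neg (fun h : x < a => hxa h.le), if_neg hne,
          Multiset.card_zero, ih]
        omega

open scoped Classical in
private lemma mulEmb_to_mulDM {X : Type*} [PartialOrder X] {m m' : Multiset X}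
    (h : MulEmb (· ≤ ·) m m') : MulDM ((· < ·) : X → X → Prop) m m' := by
  rw [mulDM_iff]
  right
  intro x hx
  by_contra hc
  push_neg at hc
  obtain ⟨t, ht, hrel⟩ := h
  have h1 : (m.filter (x ≤ ·)).card ≤ (m'.filter (x ≤ ·)).card := by
    calc (m.filter (x ≤ ·)).card ≤ (t.filter (x ≤ ·)).card :=
          filter_card_le_of_rel (fun a b ha hab => le_trans ha hab) hrel
      _ ≤ (m'.filter (x ≤ ·)).card :=
          Multiset.card_le_card (Multiset.filter_le_filter _ ht)
  have h2 : (m'.filter (x < ·)).card ≤ (m.filter (x < ·)).card := by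
    apply Multiset.card_le_card
    rw [Multiset.le_iff_count]
    intro a
    rw [Multiset.count_filter, Multiset.count_filter]
    split_ifs with hxa
    · exact hc a hxa
    · exact le_refl 0
  have e1 := filter_le_card_split x m
  have e2 := filter_le_card_split x m'
  omega

open scoped Classical in
private lemma mulDM_trans_aux {X : Type*} [PartialOrder X] {m1 m2 m3 : Multiset X}
    (H12 : ∀ x : X, Multiset.count x m2 < Multiset.count x m1 →
      ∃ y : X, x < y ∧ Multiset.count y m1 < Multiset.count y m2)
    (H23 : ∀ x : X, Multiset.count x m3 < Multiset.count x m2 →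
      ∃ y : X, x < y ∧ Multiset.count y m2 < Multiset.count y m3) :
    ∀ (n : ℕ) (x : X), ((m2 + m3).toFinset.filter (x < ·)).card ≤ n →
      (Multiset.count x m2 < Multiset.count x m1 ∨
        Multiset.count x m3 < Multiset.count x m2) →
      ∃ y : X, x < y ∧ Multiset.count y m1 < Multiset.count y m3 := by
  intro n
  induction n with
  | zero =>
    intro x hcard hx
    exfalso
    rcases hx with hx | hx
    · obtain ⟨y, hxy, hy⟩ := H12 x hx
      have hym : y ∈ (m2 + m3).toFinset := by
        simp only [Multiset.mem_toFinset, Multiset.mem_add]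
        left; rw [← Multiset.count_pos]; omega
      have : y ∈ (m2 + m3).toFinset.filter (x < ·) := Finset.mem_filter.2 ⟨hym, hxy⟩
      have := Finset.card_pos.2 ⟨y, this⟩
      omega
    · obtain ⟨y, hxy, hy⟩ := H23 x hx
      have hym : y ∈ (m2 + m3).toFinset := by
        simp only [Multiset.mem_toFinset, Multiset.mem_add]
        right; rw [← Multiset.count_pos]; omega
      have : y ∈ (m2 + m3).toFinset.filter (x < ·) := Finset.mem_filter.2 ⟨hym, hxy⟩
      have := Finset.card_pos.2 ⟨y, this⟩
      omega
  | succ n ih =>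
    intro x hcard hx
    have step : ∀ y : X, x < y → y ∈ m2 + m3 →
        ((m2 + m3).toFinset.filter (y < ·)).card ≤ n := by
      intro y hxy hym
      have hsub : (m2 + m3).toFinset.filter (y < ·) ⊆
          ((m2 + m3).toFinset.filter (x < ·)).erase y := by
        intro z hz
        rw [Finset.mem_filter] at hz
        rw [Finset.mem_erase, Finset.mem_filter]
        exact ⟨fun e => absurd (e ▸ hz.2) (lt_irrefl y), hz.1, lt_trans hxy hz.2⟩
      have hmem : y ∈ (m2 + m3).toFinset.filter (x < ·) :=
        Finset.mem_filter.2 ⟨Multiset.mem_toFinset.2 hym, hxy⟩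
      have := Finset.card_le_card hsub
      have := Finset.card_erase_of_mem hmem
      omega
    rcases hx with hx | hx
    · obtain ⟨y, hxy, hy⟩ := H12 x hx
      by_cases h3 : Multiset.count y m1 < Multiset.count y m3
      · exact ⟨y, hxy, h3⟩
      · have hym : y ∈ m2 + m3 := by
          rw [Multiset.mem_add]; left; rw [← Multiset.count_pos]; omega
        obtain ⟨z, hyz, hz⟩ := ih y (step y hxy hym) (Or.inr (by omega))
        exact ⟨z, lt_trans hxy hyz, hz⟩
    · obtain ⟨y, hxy, hy⟩ := H23 x hx
      by_cases h3 : Multiset.count y m1 < Multiset.count y m3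
      · exact ⟨y, hxy, h3⟩
      · have hym : y ∈ m2 + m3 := by
          rw [Multiset.mem_add]; right; rw [← Multiset.count_pos]; omega
        obtain ⟨z, hyz, hz⟩ := ih y (step y hxy hym) (Or.inl (by omega))
        exact ⟨z, lt_trans hxy hyz, hz⟩

theorem stmt11 (X : Type*) [PartialOrder X]
    (hX : IsWqo ((· ≤ ·) : X → X → Prop)) :
    IsWqo (MulDM ((· < ·) : X → X → Prop)) ∧
    IsPartialOrder (Multiset X) (MulDM ((· < ·) : X → X → Prop)) := by
  classical
  constructor
  · -- wqo
    intro f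
    have hpwo : (Set.univ : Set X).PartiallyWellOrderedOn (· ≤ ·) :=
      Set.partiallyWellOrderedOn_iff_exists_lt.2 fun g _ => hX g
    have hlist := hpwo.partiallyWellOrderedOn_sublistForall₂ (· ≤ ·)
    obtain ⟨i, j, hij, hs⟩ := hlist.exists_lt (f := fun n => (f n).toList) (fun n x _ => Set.mem_univ x)
    refine ⟨i, j, hij, ?_⟩
    apply mulEmb_to_mulDM
    obtain ⟨l, hl1, hl2⟩ := List.sublistForall₂_iff.1 hs
    refine ⟨(l : Multiset X), ?_, ?_⟩
    · calc (l : Multiset X) ≤ ((f j).toList : Multiset X) :=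
            Multiset.coe_le.2 hl2.subperm
        _ = f j := Multiset.coe_toList _
    · have coeRel : ∀ {l1 l2 : List X}, List.Forall₂ (· ≤ ·) l1 l2 →
          Multiset.Rel (· ≤ ·) (l1 : Multiset X) (l2 : Multiset X) := by
        intro l1 l2 h
        induction h with
        | nil => exact Multiset.Rel.zero
        | cons hab h ih => exact Multiset.Rel.cons hab ih
      have := coeRel hl1
      rwa [Multiset.coe_toList] at this
  · -- partial order
    refine { refl := fun m => Or.inl rfl, trans := ?_, antisymm := ?_ }
    · intro m1 m2 m3 h12 h23
      rw [mulDM_iff] at h12 h23 ⊢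
      rcases h12 with rfl | h12
      · exact h23
      rcases h23 with rfl | h23
      · exact Or.inr h12
      right
      intro x hx
      have hor : Multiset.count x m2 < Multiset.count x m1 ∨
          Multiset.count x m3 < Multiset.count x m2 := by omega
      exact mulDM_trans_aux h12 h23 _ x (le_refl _) hor
    · intro m m' h h'
      rw [mulDM_iff] at h h'
      rcases h with rfl | h
      · rfl
      rcases h' with rfl | h'
      · rfl
      by_contra hne
      have hex : ∃ a : X, Multiset.count a m ≠ Multiset.count a m' := by
        by_contra hc
        push_neg at hc
        exact hne (Multiset.ext.2 hc)
      obtain ⟨a, ha⟩ := hex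
      set S := (m + m').toFinset.filter
        (fun b => Multiset.count b m ≠ Multiset.count b m') with hS
      have haS : a ∈ S := by
        refine Finset.mem_filter.2 ⟨?_, ha⟩
        simp only [Multiset.mem_toFinset, Multiset.mem_add]
        rw [← Multiset.count_pos, ← Multiset.count_pos]
        omega
      obtain ⟨x, hxS, hxmax⟩ := S.exists_maximal ⟨a, haS⟩
      have hx := (Finset.mem_filter.1 hxS).2
      have key : ∀ y : X, x < y →
          Multiset.count y m = Multiset.count y m' := by
        intro y hxy
        by_contra hyc
        refine (not_le_of_gt hxy) (hxmax (y := y) ?_ ?_)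
        · refine Finset.mem_filter.2 ⟨?_, hyc⟩
          simp only [Multiset.mem_toFinset, Multiset.mem_add]
          rw [← Multiset.count_pos, ← Multiset.count_pos]
          omega
        · exact hxy.le
      rcases Nat.lt_or_ge (Multiset.count x m') (Multiset.count x m) with hlt | hge
      · obtain ⟨y, hxy, hy⟩ := h x hlt
        exact absurd (key y hxy) (by omega)
      · have hlt' : Multiset.count x m < Multiset.count x m' := by omega
        obtain ⟨y, hxy, hy⟩ := h' x hlt'
        exact absurd (key y hxy) (by omega)
end

section
/- For any ordinal α, the finite multisets over α ordered with the multiset (Dershowitz–Manna) ordering form a linear order isomorphic to the ordinal ω^α. -/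
open Ordinal
namespace Ordinal
universe u

noncomputable def nadd (a b : Ordinal.{u}) : Ordinal.{u} :=
  max (⨆ x : Set.Iio a, Order.succ (nadd x.1 b)) (⨆ x : Set.Iio b, Order.succ (nadd a x.1))
termination_by (a, b)
decreasing_by
  · exact Prod.Lex.left _ _ x.2
  · exact Prod.Lex.right _ x.2

infixl:65 " ♯ " => Ordinal.nadd

theorem nadd_def (a b : Ordinal.{u}) : a ♯ b =
    max (⨆ x : Set.Iio a, Order.succ (x.1 ♯ b)) (⨆ x : Set.Iio b, Order.succ (a ♯ x.1)) := by
  rw [nadd]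

theorem nadd_le_iff {a b c : Ordinal.{u}} :
    b ♯ c ≤ a ↔ (∀ b' < b, b' ♯ c < a) ∧ ∀ c' < c, b ♯ c' < a := by
  rw [nadd_def, max_le_iff, Ordinal.iSup_le_iff, Ordinal.iSup_le_iff]
  simp only [Order.succ_le_iff, Subtype.forall, Set.mem_Iio]

theorem nadd_lt_nadd_right {a b : Ordinal.{u}} (h : a < b) (c : Ordinal.{u}) : a ♯ c < b ♯ c :=
  (nadd_le_iff.1 le_rfl).1 a h

theorem nadd_lt_nadd_left {a b : Ordinal.{u}} (h : a < b) (c : Ordinal.{u}) : c ♯ a < c ♯ b :=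
  (nadd_le_iff.1 le_rfl).2 a h

theorem nadd_le_nadd_right {a b : Ordinal.{u}} (h : a ≤ b) (c : Ordinal.{u}) : a ♯ c ≤ b ♯ c := by
  rcases h.lt_or_eq with h | rfl
  · exact (nadd_lt_nadd_right h c).le
  · exact le_rfl

theorem nadd_le_nadd_left {a b : Ordinal.{u}} (h : a ≤ b) (c : Ordinal.{u}) : c ♯ a ≤ c ♯ b := by
  rcases h.lt_or_eq with h | rfl
  · exact (nadd_lt_nadd_left h c).le
  · exact le_rfl

theorem lt_nadd_iff {a b c : Ordinal.{u}} :
    a < b ♯ c ↔ (∃ b' < b, a ≤ b' ♯ c) ∨ ∃ c' < c, a ≤ b ♯ c' := by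
  rw [← not_le, nadd_le_iff, not_and_or]
  simp only [not_forall, not_lt, exists_prop]

theorem nadd_comm (a b : Ordinal.{u}) : a ♯ b = b ♯ a := by
  induction a using Ordinal.induction generalizing b with
  | h a IHa =>
  induction b using Ordinal.induction with
  | h b IHb =>
  apply le_antisymm
  · rw [nadd_le_iff]
    refine ⟨fun a' ha' => ?_, fun b' hb' => ?_⟩
    · rw [IHa a' ha' b]; exact nadd_lt_nadd_left ha' b
    · rw [IHb b' hb']; exact nadd_lt_nadd_right hb' a
  · rw [nadd_le_iff]
    refine ⟨fun b' hb' => ?_, fun a' ha' => ?_⟩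
    · rw [← IHb b' hb']; exact nadd_lt_nadd_left hb' a
    · rw [← IHa a' ha' b]; exact nadd_lt_nadd_right ha' b

@[simp] theorem nadd_zero (a : Ordinal.{u}) : a ♯ 0 = a := by
  induction a using Ordinal.induction with
  | h a IH =>
  apply le_antisymm
  · rw [nadd_le_iff]
    refine ⟨fun a' ha' => ?_, fun c hc => absurd hc (by simp)⟩
    rw [IH a' ha']; exact ha'
  · refine le_of_forall_lt fun c hc => ?_
    rw [← IH c hc]; exact nadd_lt_nadd_right hc 0

@[simp] theorem zero_nadd (a : Ordinal.{u}) : 0 ♯ a = a := by rw [nadd_comm, nadd_zero]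

theorem le_self_nadd {a b : Ordinal.{u}} : a ≤ a ♯ b := by
  simpa using nadd_le_nadd_left (zero_le : (0 : Ordinal) ≤ b) a

theorem add_le_nadd (a b : Ordinal.{u}) : a + b ≤ a ♯ b := by
  induction b using Ordinal.induction with
  | h b IH =>
  rcases eq_or_ne b 0 with rfl | hb
  · simp
  · refine le_of_forall_lt fun c hc => ?_
    obtain ⟨d, hd, hcd⟩ := (lt_add_iff hb).1 hc
    exact hcd.trans_lt ((IH d hd).trans_lt (nadd_lt_nadd_left hd a))

theorem nadd_assoc (a b c : Ordinal.{u}) : a ♯ b ♯ c = a ♯ (b ♯ c) := by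
  induction a using Ordinal.induction generalizing b c with
  | h a IHa =>
  induction b using Ordinal.induction generalizing c with
  | h b IHb =>
  induction c using Ordinal.induction with
  | h c IHc =>
  apply le_antisymm
  · rw [nadd_le_iff]
    refine ⟨fun d hd => ?_, fun c' hc' => ?_⟩
    · rcases lt_nadd_iff.1 hd with ⟨a', ha', hd'⟩ | ⟨b', hb', hd'⟩
      · exact (nadd_le_nadd_right hd' c).trans_lt
          ((IHa a' ha' b c).le.trans_lt (nadd_lt_nadd_right ha' _))
      · exact (nadd_le_nadd_right hd' c).trans_lt
          ((IHb b' hb' c).le.trans_lt (nadd_lt_nadd_left (nadd_lt_nadd_right hb' c) a))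
    · rw [IHc c' hc']; exact nadd_lt_nadd_left (nadd_lt_nadd_left hc' b) a
  · rw [nadd_le_iff]
    refine ⟨fun a' ha' => ?_, fun d hd => ?_⟩
    · rw [← IHa a' ha' b c]; exact nadd_lt_nadd_right (nadd_lt_nadd_right ha' b) c
    · rcases lt_nadd_iff.1 hd with ⟨b', hb', hd'⟩ | ⟨c', hc', hd'⟩
      · exact (nadd_le_nadd_left hd' a).trans_lt
          ((IHb b' hb' c).symm.le.trans_lt (nadd_lt_nadd_right (nadd_lt_nadd_left hb' a) c))
      · exact (nadd_le_nadd_left hd' a).trans_lt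
          ((IHc c' hc').symm.le.trans_lt (nadd_lt_nadd_left hc' _))

theorem nadd_left_comm (a b c : Ordinal.{u}) : a ♯ (b ♯ c) = b ♯ (a ♯ c) := by
  rw [← nadd_assoc, nadd_comm a b, nadd_assoc]

theorem le_of_nadd_le_nadd_right {a b c : Ordinal.{u}} (h : b ♯ a ≤ c ♯ a) : b ≤ c :=
  le_of_not_gt fun h' => absurd h (not_le.2 (nadd_lt_nadd_right h' a))

theorem nadd_right_cancel {a b c : Ordinal.{u}} (h : a ♯ b = c ♯ b) : a = c :=
  le_antisymm (le_of_nadd_le_nadd_right h.le) (le_of_nadd_le_nadd_right h.ge)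

instance : LeftCommutative nadd.{u} := ⟨nadd_left_comm⟩

end Ordinal

lemma MulDM_iff {X : Type*} [LinearOrder X] [DecidableEq X] (m m' : Multiset X) :
    MulDM (· < ·) m m' ↔ (m = m' ∨ ∀ x ∈ m - m ∩ m', ∃ y ∈ m' - m ∩ m', x < y) := by
  unfold MulDM
  have : (fun (a b : X) => Classical.propDecidable (a = b)) = ‹DecidableEq X› :=
    Subsingleton.elim _ _
  rw [this]

namespace Stmt14Aux


/-- `c + c*k + t = c*(k+1) + t` -/
lemma arith (c : Ordinal) (k : ℕ) (t : Ordinal) :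
    c + (c * k + t) = c * (k + 1 : ℕ) + t := by
  rw [← add_assoc]
  congr 1
  have : c + c * (k : Ordinal) = c * ((1 + k : ℕ) : Ordinal) := by
    push_cast
    rw [mul_add, mul_one]
  rw [this, Nat.add_comm]

lemma bound (e : Ordinal) (k : ℕ) {t : Ordinal} (ht : t < ω ^ e) :
    ω ^ e * k + t < ω ^ e * ω := by
  calc ω ^ e * k + t < ω ^ e * k + ω ^ e := add_lt_add_right ht _
    _ = ω ^ e * ((k + 1 : ℕ) : Ordinal) := by
        push_cast
        rw [mul_add, mul_one]
    _ ≤ ω ^ e * ω := mul_le_mul_right (nat_lt_omega0 (k + 1)).le _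

/-- decomposition of `z < ω^e * ω` -/
lemma decomp {e z : Ordinal} (hz : z < ω ^ e * ω) :
    ∃ (k : ℕ) (r : Ordinal), r < ω ^ e ∧ z = ω ^ e * k + r := by
  have h0 : (ω ^ e : Ordinal) ≠ 0 := opow_ne_zero e omega0_ne_zero
  have hd : z / ω ^ e < ω := (div_lt h0).2 hz
  obtain ⟨k, hk⟩ := lt_omega0.1 hd
  exact ⟨k, z % ω ^ e, mod_lt z h0, by rw [← hk, div_add_mod]⟩

lemma Wlem (e : Ordinal) (hPr : ∀ a < ω ^ e, ∀ b < ω ^ e, a ♯ b < ω ^ e) :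
    ∀ z < ω ^ e * ω, (∀ a < ω ^ e, a ♯ z < ω ^ e + z) ∧ ω ^ e ♯ z = ω ^ e + z := by
  intro z
  induction z using Ordinal.induction with
  | h z IH =>
    intro hz
    obtain ⟨k, r, hr, hzd⟩ := decomp hz
    have hA : ∀ a < ω ^ e, a ♯ z < ω ^ e + z := by
      intro a ha
      cases k with
      | zero =>
        have hze : z < ω ^ e := by rw [hzd]; simpa using hr
        exact (hPr a ha z hze).trans_le le_self_add
      | succ k =>
        set z₀ : Ordinal := ω ^ e * k + r with hz₀
        have hzz₀ : z = ω ^ e + z₀ := by rw [hz₀, arith, hzd]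
        have hz₀z : z₀ < z := by
          calc z₀ < ω ^ e * k + ω ^ e := add_lt_add_right hr _
            _ = ω ^ e * ((k + 1 : ℕ) : Ordinal) := by push_cast; rw [mul_add, mul_one]
            _ ≤ z := by rw [hzd]; exact le_self_add
        have hz₀ω : z₀ < ω ^ e * ω := hz₀z.trans hz
        obtain ⟨A₀, E₀⟩ := IH z₀ hz₀z hz₀ω
        have hznadd : z = ω ^ e ♯ z₀ := by rw [E₀, hzz₀]
        have hw : a ♯ z₀ < z := by rw [hzz₀]; exact A₀ a ha
        have hwω : a ♯ z₀ < ω ^ e * ω := hw.trans hz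
        have Ew := (IH _ hw hwω).2
        calc a ♯ z = ω ^ e ♯ (a ♯ z₀) := by rw [hznadd, nadd_left_comm]
          _ = ω ^ e + (a ♯ z₀) := Ew
          _ < ω ^ e + z := add_lt_add_right hw _
    refine ⟨hA, le_antisymm ?_ (add_le_nadd _ _)⟩
    rw [nadd_le_iff]
    refine ⟨fun a ha => hA a ha, fun z' hz' => ?_⟩
    rw [(IH z' hz' (hz'.trans hz)).2]
    exact add_lt_add_right hz' _

lemma principal : ∀ e : Ordinal, ∀ a < ω ^ e, ∀ b < ω ^ e, a ♯ b < ω ^ e := by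
  intro e
  induction e using Ordinal.induction with
  | h e IH =>
    rcases Ordinal.zero_or_succ_or_isSuccLimit e with he | ⟨d, hd⟩ | he
    · subst he
      intro a ha b hb
      rw [opow_zero] at *
      rw [Ordinal.lt_one_iff_zero] at ha hb
      subst ha; subst hb
      simpa using Ordinal.zero_lt_one
    · subst hd
      have hW := Wlem d (IH d (Order.lt_succ d))
      have hPd := IH d (Order.lt_succ d)
      intro a ha b hb
      rw [opow_succ] at ha hb ⊢
      obtain ⟨k, r, hr, har⟩ := decomp ha
      obtain ⟨l, s, hs, hbs⟩ := decomp hb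
      -- key: (ω^d*k + r) ♯ (ω^d*l + s) = ω^d*(k+l) + (r ♯ s)
      have key : ∀ (k : ℕ) (r : Ordinal), r < ω ^ d → ∀ (l : ℕ) (s : Ordinal), s < ω ^ d →
          (ω ^ d * k + r) ♯ (ω ^ d * l + s) = ω ^ d * ((k + l : ℕ) : Ordinal) + (r ♯ s) := by
        intro k
        induction k with
        | zero =>
          intro r hr l
          induction l with
          | zero => intro s hs; simp
          | succ l IHl =>
            intro s hs
            have h1 : ω ^ d * ((l + 1 : ℕ) : Ordinal) + s = ω ^ d ♯ (ω ^ d * l + s) := by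
              rw [(hW _ (bound d l hs)).2, arith]
            rw [h1, nadd_left_comm, IHl s hs]
            simp only [Nat.zero_add]
            rw [(hW _ (bound d l (hPd r hr s hs))).2, arith]
        | succ k IHk =>
          intro r hr l s hs
          have h1 : ω ^ d * ((k + 1 : ℕ) : Ordinal) + r = ω ^ d ♯ (ω ^ d * k + r) := by
            rw [(hW _ (bound d k hr)).2, arith]
          have hnat : ((k + l + 1 : ℕ) : Ordinal) = ((k + 1 + l : ℕ) : Ordinal) := by
            norm_cast
            omega
          rw [h1, nadd_assoc, IHk r hr l s hs,
            (hW _ (bound d (k + l) (hPd r hr s hs))).2, arith, hnat]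
      rw [har, hbs, key k r hr l s hs]
      exact bound d (k + l) (hPd r hr s hs)
    · intro a ha b hb
      obtain ⟨c, hc, hac⟩ := (lt_opow_of_isSuccLimit omega0_ne_zero he).1 ha
      obtain ⟨c', hc', hbc⟩ := (lt_opow_of_isSuccLimit omega0_ne_zero he).1 hb
      have hmax : max c c' < e := max_lt hc hc'
      have ha' : a < ω ^ max c c' :=
        hac.trans_le (opow_le_opow_right omega0_pos (le_max_left _ _))
      have hb' : b < ω ^ max c c' :=
        hbc.trans_le (opow_le_opow_right omega0_pos (le_max_right _ _))
      exact (IH _ hmax a ha' b hb').trans_le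
        (opow_le_opow_right omega0_pos hmax.le)

lemma nadd_opow_eq_add {e z : Ordinal} (hz : z < ω ^ e * ω) : ω ^ e ♯ z = ω ^ e + z :=
  (Wlem e (principal e) z hz).2


noncomputable def osum (s : Multiset Ordinal) : Ordinal :=
  (s.map fun b => ω ^ b).foldr nadd 0

@[simp] lemma osum_zero : osum 0 = 0 := rfl

@[simp] lemma osum_cons (a : Ordinal) (s : Multiset Ordinal) :
    osum (a ::ₘ s) = ω ^ a ♯ osum s := by
  simp [osum, Multiset.foldr_cons]

lemma osum_add (s t : Multiset Ordinal) : osum (s + t) = osum s ♯ osum t := by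
  induction s using Multiset.induction with
  | empty => simp
  | cons a s IH => rw [Multiset.cons_add, osum_cons, osum_cons, IH, nadd_assoc]

lemma osum_singleton (a : Ordinal) : osum {a} = ω ^ a := by
  rw [← Multiset.cons_zero, osum_cons, osum_zero, nadd_zero]

lemma osum_mono {s t : Multiset Ordinal} (h : s ≤ t) : osum s ≤ osum t := by
  obtain ⟨u, rfl⟩ := Multiset.le_iff_exists_add.1 h
  rw [osum_add]
  exact le_self_nadd

lemma opow_le_osum {a : Ordinal} {s : Multiset Ordinal} (h : a ∈ s) : ω ^ a ≤ osum s := by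
  have := osum_mono (Multiset.singleton_le.2 h)
  rwa [osum_singleton] at this

lemma osum_lt_opow {e : Ordinal} {s : Multiset Ordinal} (h : ∀ b ∈ s, b < e) :
    osum s < ω ^ e := by
  induction s using Multiset.induction with
  | empty => simpa using opow_pos e omega0_pos
  | cons a s IH =>
    rw [osum_cons]
    exact principal e _ ((opow_lt_opow_iff_right one_lt_omega0).2 (h a (Multiset.mem_cons_self a s)))
      _ (IH fun b hb => h b (Multiset.mem_cons_of_mem hb))

lemma osum_replicate (n : ℕ) (e : Ordinal) : osum (Multiset.replicate n e) = ω ^ e * n := by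
  induction n with
  | zero => simp
  | succ n IH =>
    rw [Multiset.replicate_succ, osum_cons, IH,
      nadd_opow_eq_add (by simpa using bound e n (opow_pos e omega0_pos))]
    simpa using arith (ω ^ e) n 0

lemma osum_pos {s : Multiset Ordinal} (h : s ≠ 0) : 0 < osum s := by
  obtain ⟨a, ha⟩ := Multiset.exists_mem_of_ne_zero h
  exact lt_of_lt_of_le (opow_pos a omega0_pos) (opow_le_osum ha)


lemma mul_nadd_eq (e : Ordinal) (n : ℕ) {r : Ordinal} (hr : r < ω ^ e) :
    ω ^ e * n ♯ r = ω ^ e * n + r := by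
  induction n with
  | zero => simp
  | succ n IH =>
    have h1 : (ω ^ e * ((n + 1 : ℕ) : Ordinal)) = ω ^ e ♯ ω ^ e * n := by
      rw [nadd_opow_eq_add (by simpa using bound e n (opow_pos e omega0_pos))]
      simpa using (arith (ω ^ e) n 0).symm
    rw [h1, nadd_assoc, IH, nadd_opow_eq_add (bound e n hr), arith, ← h1]

section Main

variable {α : Ordinal}

noncomputable def F (m : Multiset {β : Ordinal // β < α}) : Ordinal :=
  osum (m.map Subtype.val)

lemma F_lt (m : Multiset {β : Ordinal // β < α}) : F m < ω ^ α := by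
  apply osum_lt_opow
  intro b hb
  obtain ⟨x, _, rfl⟩ := Multiset.mem_map.1 hb
  exact x.2

lemma F_add (m m' : Multiset {β : Ordinal // β < α}) : F (m + m') = F m ♯ F m' := by
  rw [F, Multiset.map_add, osum_add]; rfl

/-- if every elt of u is below some elt of v, the sum of u is at most that of v -/
lemma F_le_of_lt {u v : Multiset {β : Ordinal // β < α}}
    (h : ∀ x ∈ u, ∃ y ∈ v, x < y) : F u ≤ F v := by
  classical
  rcases eq_or_ne u 0 with rfl | hu
  · have h0 : F (0 : Multiset {β : Ordinal // β < α}) = 0 := by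
      rw [F, Multiset.map_zero, osum_zero]
    rw [h0]
    exact zero_le
  have hv : v.toFinset.Nonempty := by
    rw [Multiset.toFinset_nonempty]
    obtain ⟨x, hx⟩ := Multiset.exists_mem_of_ne_zero hu
    obtain ⟨y, hy, _⟩ := h x hx
    exact fun h0 => by simp [h0] at hy
  set w := v.toFinset.max' hv with hw
  have hwv : w ∈ v := Multiset.mem_toFinset.1 (v.toFinset.max'_mem hv)
  have hlt : F u < ω ^ w.1 := by
    apply osum_lt_opow
    intro b hb
    obtain ⟨x, hx, rfl⟩ := Multiset.mem_map.1 hb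
    obtain ⟨y, hy, hxy⟩ := h x hx
    exact lt_of_lt_of_le hxy (v.toFinset.le_max' y (Multiset.mem_toFinset.2 hy))
  exact hlt.le.trans (opow_le_osum (Multiset.mem_map_of_mem _ hwv))

lemma F_lt_of_max {u v : Multiset {β : Ordinal // β < α}} {x : {β : Ordinal // β < α}}
    (hx : x ∈ v) (h : ∀ y ∈ u, y < x) : F u < F v := by
  have h1 : F u < ω ^ x.1 := by
    apply osum_lt_opow
    intro b hb
    obtain ⟨y, hy, rfl⟩ := Multiset.mem_map.1 hb
    exact h y hy
  exact h1.trans_le (opow_le_osum (Multiset.mem_map_of_mem _ hx))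

open scoped Classical in
lemma main_iff (m m' : Multiset {β : Ordinal // β < α}) :
    MulDM (· < ·) m m' ↔ F m ≤ F m' := by
  set c := m ∩ m' with hc
  set d := m - c with hd
  set d' := m' - c with hd'
  have hm : d + c = m := tsub_add_cancel_of_le Multiset.inter_le_left
  have hm' : d' + c = m' := tsub_add_cancel_of_le Multiset.inter_le_right
  have hdisj : ∀ x ∈ d, x ∉ d' := by
    intro x hxd hxd'
    rw [hd, ← Multiset.count_pos, Multiset.count_sub, hc, Multiset.count_inter] at hxd
    rw [hd', ← Multiset.count_pos, Multiset.count_sub, hc, Multiset.count_inter] at hxd'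
    omega
  constructor
  · intro h
    rw [MulDM_iff, ← hc, ← hd, ← hd'] at h
    rcases h with rfl | h
    · exact le_rfl
    · have : F d ≤ F d' := F_le_of_lt h
      calc F m = F d ♯ F c := by rw [← hm, F_add]
        _ ≤ F d' ♯ F c := nadd_le_nadd_right this _
        _ = F m' := by rw [← hm', F_add]
  · intro h
    have hdd : F d ≤ F d' := by
      apply le_of_nadd_le_nadd_right (a := F c)
      rw [← F_add, ← F_add, hm, hm']
      exact h
    rw [MulDM_iff, ← hc, ← hd, ← hd']
    right
    intro x hx
    by_contra hcon
    push_neg at hcon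
    have hlt : ∀ y ∈ d', y < x := by
      intro y hy
      rcases lt_or_eq_of_le (hcon y hy) with h1 | h1
      · exact h1
      · exact absurd (h1 ▸ hy) (hdisj x hx)
    exact absurd hdd (not_le.2 (F_lt_of_max hx hlt))

open scoped Classical in
lemma F_inj (m m' : Multiset {β : Ordinal // β < α}) (h : F m = F m') : m = m' := by
  set c := m ∩ m' with hc
  set d := m - c with hd
  set d' := m' - c with hd'
  have hm : d + c = m := tsub_add_cancel_of_le Multiset.inter_le_left
  have hm' : d' + c = m' := tsub_add_cancel_of_le Multiset.inter_le_right
  have hdisj : ∀ x ∈ d, x ∉ d' := by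
    intro x hxd hxd'
    rw [hd, ← Multiset.count_pos, Multiset.count_sub, hc, Multiset.count_inter] at hxd
    rw [hd', ← Multiset.count_pos, Multiset.count_sub, hc, Multiset.count_inter] at hxd'
    omega
  have hdd : F d = F d' := by
    refine nadd_right_cancel (b := F c) ?_
    rw [← F_add, ← F_add, hm, hm', h]
  have hzero : d + d' = 0 := by
    by_contra h0
    have hne : (d + d').toFinset.Nonempty := by
      rw [Multiset.toFinset_nonempty]; exact h0
    set w := (d + d').toFinset.max' hne with hw
    have hmax : ∀ y ∈ d + d', y ≤ w :=
      fun y hy => (d + d').toFinset.le_max' y (Multiset.mem_toFinset.2 hy)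
    have hwmem : w ∈ d + d' := Multiset.mem_toFinset.1 ((d + d').toFinset.max'_mem hne)
    rcases Multiset.mem_add.1 hwmem with hwd | hwd'
    · have : F d' < F d := by
        apply F_lt_of_max hwd
        intro y hy
        exact lt_of_le_of_ne (hmax y (Multiset.mem_add.2 (Or.inr hy)))
          (fun hyx => (hdisj w hwd) (hyx ▸ hy))
      exact absurd hdd.le (not_le.2 this)
    · have : F d < F d' := by
        apply F_lt_of_max hwd'
        intro y hy
        exact lt_of_le_of_ne (hmax y (Multiset.mem_add.2 (Or.inl hy)))
          (fun hyx => (hdisj y hy) (hyx ▸ hwd'))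
      exact absurd hdd.symm.le (not_le.2 this)
  obtain ⟨hd0, hd'0⟩ := add_eq_zero.1 hzero
  rw [← hm, ← hm', hd0, hd'0]

lemma F_surj : ∀ x < ω ^ α, ∃ m : Multiset {β : Ordinal // β < α}, F m = x := by
  intro x
  induction x using Ordinal.induction with
  | h x IH =>
    intro hx
    rcases eq_or_ne x 0 with rfl | hx0
    · exact ⟨0, by simp [F, osum_zero]⟩
    set e := log ω x with he
    have h1 : ω ^ e ≤ x := opow_log_le_self ω hx0
    have heα : e < α := by
      by_contra hcon
      push_neg at hcon
      exact absurd (h1.trans_lt hx) (not_lt.2 (opow_le_opow_right omega0_pos hcon))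
    have h2 : x < ω ^ e * ω := by
      have := lt_opow_succ_log_self one_lt_omega0 x
      rwa [opow_succ] at this
    have h0 : (ω ^ e : Ordinal) ≠ 0 := opow_ne_zero e omega0_ne_zero
    obtain ⟨n, hn⟩ := lt_omega0.1 ((div_lt h0).2 h2)
    have hr : x % ω ^ e < ω ^ e := mod_lt x h0
    have hxeq : ω ^ e * n + x % ω ^ e = x := by rw [← hn, div_add_mod]
    have hrx : x % ω ^ e < x := hr.trans_le h1
    obtain ⟨m₀, hm₀⟩ := IH _ hrx (hrx.trans hx)
    refine ⟨Multiset.replicate n ⟨e, heα⟩ + m₀, ?_⟩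
    rw [F_add, hm₀]
    have : F (Multiset.replicate n (⟨e, heα⟩ : {β : Ordinal // β < α})) = ω ^ e * n := by
      rw [F, Multiset.map_replicate, osum_replicate]
    rw [this, mul_nadd_eq e n hr, hxeq]

end Main
end Stmt14Aux

theorem stmt14 (α : Ordinal) :
    ∃ e : Multiset {β : Ordinal // β < α} ≃ {β : Ordinal // β < ω ^ α},
      ∀ m m' : Multiset {β : Ordinal // β < α},
        MulDM (· < ·) m m' ↔ e m ≤ e m' := by
  have hbij : Function.Bijective
      (fun m : Multiset {β : Ordinal // β < α} => (⟨Stmt14Aux.F m, Stmt14Aux.F_lt m⟩ :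
        {β : Ordinal // β < ω ^ α})) := by
    constructor
    · intro m m' h
      exact Stmt14Aux.F_inj m m' (congrArg Subtype.val h)
    · rintro ⟨x, hx⟩
      obtain ⟨m, hm⟩ := Stmt14Aux.F_surj x hx
      exact ⟨m, Subtype.ext hm⟩
  refine ⟨Equiv.ofBijective _ hbij, fun m m' => ?_⟩
  rw [Stmt14Aux.main_iff]
  simp [Equiv.ofBijective, Subtype.mk_le_mk]
end
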